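/- For 0 < α < 1 and integer n ≥ 1, the quantity ψ_n(α)/n is strictly decreasing in n; that is, ψ_{n+1}(α)/(n+1) < ψ_n(α)/n. -/

import Mathlib

/-!
With `c = cos (πα)` one has `ψ_n(α) / n = (1 - c + F (1/n + c)) / (2 sin (πα/2))`, where
`F u = u + √(u² + (1 - c²))`. As `|u| < √(u² + k)` for `k > 0`, the difference quotients of
`u ↦ √(u² + k)` have absolute value less than `1`, so `F` is strictly increasing; and `1/n` decreases.
-/

noncomputable def psi (α : ℝ) (n : ℕ) : ℝ :=
  ((n : ℝ) + 1 + Real.sqrt ((n : ℝ)^2 + 2 * n * Real.cos (Real.pi * α) + 1)) /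
    (2 * Real.sin (Real.pi * α / 2))

open Real

theorem strictMono_add_sqrt_sq_add {k : ℝ} (hk : 0 < k) :
    StrictMono fun u : ℝ => u + √(u ^ 2 + k) := by
  intro u v huv
  have hu : |u| < √(u ^ 2 + k) := by
    rw [← sqrt_sq_eq_abs]; exact sqrt_lt_sqrt (sq_nonneg _) (by linarith)
  have hv : |v| < √(v ^ 2 + k) := by
    rw [← sqrt_sq_eq_abs]; exact sqrt_lt_sqrt (sq_nonneg _) (by linarith)
  have hu2 := sq_sqrt (show 0 ≤ u ^ 2 + k by positivity)
  have hv2 := sq_sqrt (show 0 ≤ v ^ 2 + k by positivity)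
  -- `(√(u²+k) - √(v²+k)) (√(u²+k) + √(v²+k)) = (u - v)(u + v)` and `|u + v| < √(u²+k) + √(v²+k)`
  dsimp only
  nlinarith [le_abs_self u, neg_abs_le u, le_abs_self v, neg_abs_le v]

theorem add_one_add_sqrt_div_eq {x : ℝ} (hx : 0 < x) (c : ℝ) :
    (x + 1 + √(x ^ 2 + 2 * x * c + 1)) / x =
      1 - c + ((x⁻¹ + c) + √((x⁻¹ + c) ^ 2 + (1 - c ^ 2))) := by
  have hsqrt : √(x ^ 2 + 2 * x * c + 1) / x = √((x⁻¹ + c) ^ 2 + (1 - c ^ 2)) := by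
    have hrad : x ^ 2 + 2 * x * c + 1 = ((x⁻¹ + c) ^ 2 + (1 - c ^ 2)) * x ^ 2 := by
      field_simp
      ring
    rw [hrad, sqrt_mul' _ (sq_nonneg x), sqrt_sq hx.le, mul_div_cancel_right₀ _ hx.ne']
  rw [add_div, add_div, div_self hx.ne', hsqrt, inv_eq_one_div]
  ring

theorem strictAntiOn_add_one_add_sqrt_div {c : ℝ} (hc : c ^ 2 < 1) :
    StrictAntiOn (fun x : ℝ => (x + 1 + √(x ^ 2 + 2 * x * c + 1)) / x) (Set.Ioi 0) := by
  intro x hx y hy hxy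
  simp only [add_one_add_sqrt_div_eq hx, add_one_add_sqrt_div_eq hy]
  have hinv : y⁻¹ + c < x⁻¹ + c := by gcongr
  linarith [strictMono_add_sqrt_sq_add (sub_pos.mpr hc) hinv]

theorem stmt1 (α : ℝ) (hα0 : 0 < α) (hα1 : α < 1) (n : ℕ) (hn : 1 ≤ n) :
    psi α (n + 1) / (n + 1) < psi α n / n := by
  have hcos : cos (π * α) ^ 2 < 1 := by
    rw [cos_sq', sub_lt_self_iff]
    exact pow_pos (sin_pos_of_pos_of_lt_pi (by positivity) (by nlinarith [pi_pos])) 2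
  have hsin : 0 < 2 * sin (π * α / 2) :=
    mul_pos two_pos (sin_pos_of_pos_of_lt_pi (by positivity) (by nlinarith [pi_pos]))
  have hn0 : (0 : ℝ) < n := by exact_mod_cast hn
  have hdecr := strictAntiOn_add_one_add_sqrt_div hcos (Set.mem_Ioi.mpr hn0)
    (Set.mem_Ioi.mpr (by positivity : (0 : ℝ) < n + 1)) (lt_add_one _)
  simp only [psi, div_right_comm _ (2 * sin _)]
  push_cast
  exact div_lt_div_of_pos_right hdecr hsin
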